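/- For every set A ∈ 𝒜₄ there exist k ∈ {0,1,2} and an isometry g of ℝ⁴ mapping the cube [0,1]⁴ onto itself, such that the set A ∪ g(I_k) can be covered by 8 boxes from 𝒫₄, where I_k denotes the line segment joining the points (1/4, k/4, 0, 0) and (3/4, k/4, 0, 0). -/

import Mathlib

open scoped BigOperators

/-- `S` is a box of the family `𝒫ₙ`: an axis-parallel parallelotope
`∏ᵢ [xᵢ, xᵢ + δᵢ]` with `δᵢ ≥ 0` and `∑ᵢ δᵢ < 1`. -/
def IsBoxP (n : ℕ) (S : Set (EuclideanSpace ℝ (Fin n))) : Prop :=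
  ∃ x δ : Fin n → ℝ, (∀ i, 0 ≤ δ i) ∧ (∑ i, δ i) < 1 ∧
    S = {p : EuclideanSpace ℝ (Fin n) | ∀ i, p i ∈ Set.Icc (x i) (x i + δ i)}

/-- The `(n-2)`-skeleton `B_{n-2,n}` of the unit cube `[0,1]ⁿ`: points of the cube
having at least two coordinates equal to `0` or `1`. -/
def skeletonTwo (n : ℕ) : Set (EuclideanSpace ℝ (Fin n)) :=
  {p | (∀ i, p i ∈ Set.Icc (0 : ℝ) 1) ∧
    ∃ i j : Fin n, i ≠ j ∧ (p i = 0 ∨ p i = 1) ∧ (p j = 0 ∨ p j = 1)}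

/-- `A` belongs to the family `𝒜ₙ`: `A = ⋃ᵢ {xᵢ, xᵢ + eᵢ}` where `xᵢ` and `xᵢ + eᵢ`
lie in the unit cube `[0,1]ⁿ`. -/
def MemA (n : ℕ) (A : Set (EuclideanSpace ℝ (Fin n))) : Prop :=
  ∃ x : Fin n → EuclideanSpace ℝ (Fin n),
    (∀ i, (∀ j, x i j ∈ Set.Icc (0 : ℝ) 1) ∧
      (∀ j, (x i + EuclideanSpace.single i 1 : EuclideanSpace ℝ (Fin n)) j ∈ Set.Icc (0 : ℝ) 1)) ∧
    A = ⋃ i, ({x i, x i + EuclideanSpace.single i 1} : Set (EuclideanSpace ℝ (Fin n)))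

/-- The unit cube `[0,1]⁴` in `ℝ⁴`. -/
def unitCube : Set (EuclideanSpace ℝ (Fin 4)) :=
  {p | ∀ i, p i ∈ Set.Icc (0 : ℝ) 1}

/-- The point `(a, b, 0, 0)` of `ℝ⁴`. -/
noncomputable def pt (a b : ℝ) : EuclideanSpace ℝ (Fin 4) :=
  (WithLp.equiv 2 (Fin 4 → ℝ)).symm ![a, b, 0, 0]

/-!
Six of the eight points of `A` get singleton boxes, so two boxes have to cover the segment
together with one endpoint of each of the pairs `{x₀, x₀ + e₀}` and `{x₁, x₁ + e₁}`.
The bounding box of an axis-parallel segment of length `1/2` and a point `q` has total side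
length `1/2` plus the `ℓ¹`-distance from `q` to the segment, so one box suffices as soon as a
symmetry of the cube moves some `I_k` within `ℓ¹`-distance `1/2` of `x₀` or of `x₁`. Folding
the coordinates of `q` into `[0, 1/2]`, this is a finite check on three numbers, and it fails
only if these numbers are equal and at least `3/8`, i.e. `x₀` and `x₁` are near the centres of
their facets. In that case `I₂` is split at its midpoint and each half, together with a
suitable endpoint of one of the two pairs, spans a box of total side at most `7/8`.
-/

open Set

local notation "ℝ⁴" => EuclideanSpace ℝ (Fin 4)

section CubeSymmetry

variable {n : ℕ}

def flipIf (b : Bool) (t : ℝ) : ℝ := if b then 1 - t else t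

@[simp]
lemma flipIf_false (t : ℝ) : flipIf false t = t :=
  rfl

@[simp]
lemma flipIf_true (t : ℝ) : flipIf true t = 1 - t :=
  rfl

lemma flipIf_flipIf (b : Bool) (t : ℝ) : flipIf b (flipIf b t) = t := by
  cases b <;> simp

lemma flipIf_mem_Icc {b : Bool} {t : ℝ} (ht : t ∈ Icc (0 : ℝ) 1) : flipIf b t ∈ Icc (0 : ℝ) 1 := by
  cases b
  · exact ht
  · rw [flipIf_true]
    exact ⟨by linarith [ht.2], by linarith [ht.1]⟩

lemma abs_flipIf_sub_flipIf (b : Bool) (s t : ℝ) : |flipIf b s - flipIf b t| = |s - t| := by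
  cases b
  · rfl
  · rw [flipIf_true, flipIf_true, abs_sub_comm]
    congr 1
    ring

lemma flipIf_mem_uIcc {b : Bool} {s t u : ℝ} (ht : t ∈ uIcc s u) :
    flipIf b t ∈ uIcc (flipIf b s) (flipIf b u) := by
  cases b
  · exact ht
  · simp only [flipIf_true, mem_uIcc] at ht ⊢
    rcases ht with h | h
    · right; constructor <;> linarith [h.1, h.2]
    · left; constructor <;> linarith [h.1, h.2]

lemma flipIf_half (b : Bool) : flipIf b (1 / 2) = 1 / 2 := by
  cases b <;> norm_num

def cubeSymm (σ : Equiv.Perm (Fin n)) (ε : Fin n → Bool) (y : EuclideanSpace ℝ (Fin n)) :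
    EuclideanSpace ℝ (Fin n) :=
  WithLp.toLp 2 fun j => flipIf (ε j) (y (σ.symm j))

@[simp]
lemma cubeSymm_apply (σ : Equiv.Perm (Fin n)) (ε : Fin n → Bool) (y : EuclideanSpace ℝ (Fin n))
    (j : Fin n) : cubeSymm σ ε y j = flipIf (ε j) (y (σ.symm j)) :=
  rfl

lemma isometry_cubeSymm (σ : Equiv.Perm (Fin n)) (ε : Fin n → Bool) : Isometry (cubeSymm σ ε) := by
  refine Isometry.of_dist_eq fun y y' => ?_
  simp only [EuclideanSpace.dist_eq, cubeSymm_apply, Real.dist_eq, abs_flipIf_sub_flipIf]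
  congr 1
  exact Equiv.sum_comp σ.symm fun i => |y i - y' i| ^ 2

lemma cubeSymm_cubeSymm_symm (σ : Equiv.Perm (Fin n)) (ε : Fin n → Bool)
    (y : EuclideanSpace ℝ (Fin n)) : cubeSymm σ ε (cubeSymm σ.symm (ε ∘ σ) y) = y := by
  ext j
  simp [flipIf_flipIf]

lemma cubeSymm_image_cube (σ : Equiv.Perm (Fin n)) (ε : Fin n → Bool) :
    cubeSymm σ ε '' {p | ∀ i, p i ∈ Icc (0 : ℝ) 1} = {p | ∀ i, p i ∈ Icc (0 : ℝ) 1} := by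
  refine Subset.antisymm ?_ fun y hy => ⟨_, ?_, cubeSymm_cubeSymm_symm σ ε y⟩
  · rintro _ ⟨y, hy, rfl⟩ j
    exact flipIf_mem_Icc (hy _)
  · exact fun j => flipIf_mem_Icc (hy _)

end CubeSymmetry

section Boxes

variable {n : ℕ}

def cornerBox (a b : EuclideanSpace ℝ (Fin n)) : Set (EuclideanSpace ℝ (Fin n)) :=
  {p | ∀ j, p j ∈ uIcc (a j) (b j)}

lemma segment_subset_cornerBox (a b : EuclideanSpace ℝ (Fin n)) :
    segment ℝ a b ⊆ cornerBox a b := by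
  rintro _ ⟨s, t, hs, ht, hst, rfl⟩ j
  rw [← segment_eq_uIcc]
  exact ⟨s, t, hs, ht, hst, by simp⟩

lemma cubeSymm_image_cornerBox_subset (σ : Equiv.Perm (Fin n)) (ε : Fin n → Bool)
    (a b : EuclideanSpace ℝ (Fin n)) :
    cubeSymm σ ε '' cornerBox a b ⊆ cornerBox (cubeSymm σ ε a) (cubeSymm σ ε b) := by
  rintro _ ⟨p, hp, rfl⟩ j
  exact flipIf_mem_uIcc (hp _)

lemma isBoxP_of_le (lo hi : Fin n → ℝ) (h : ∀ i, lo i ≤ hi i) (hs : ∑ i, (hi i - lo i) < 1) :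
    IsBoxP n {p | ∀ i, p i ∈ Icc (lo i) (hi i)} :=
  ⟨lo, fun i => hi i - lo i, fun i => sub_nonneg.mpr (h i), hs, by simp⟩

lemma isBoxP_singleton (q : EuclideanSpace ℝ (Fin n)) : IsBoxP n {q} := by
  convert isBoxP_of_le (fun i => q i) (fun i => q i) (fun _ => le_rfl) (by simp)
  ext p
  simp only [mem_singleton_iff, mem_ofPred_eq, Icc_self, WithLp.ext_iff, funext_iff]

def InPBox (T : Set (EuclideanSpace ℝ (Fin n))) : Prop :=
  ∃ B, IsBoxP n B ∧ T ⊆ B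

lemma InPBox.mono {S T : Set (EuclideanSpace ℝ (Fin n))} (hT : InPBox T) (hST : S ⊆ T) :
    InPBox S :=
  let ⟨B, hB, hTB⟩ := hT
  ⟨B, hB, hST.trans hTB⟩

lemma inPBox_singleton (q : EuclideanSpace ℝ (Fin n)) : InPBox {q} :=
  ⟨{q}, isBoxP_singleton q, subset_rfl⟩

def spread (a b v : ℝ) : ℝ := max (max a b) v - min (min a b) v

lemma inPBox_insert_cornerBox (a b q : EuclideanSpace ℝ (Fin n))
    (h : ∑ j, spread (a j) (b j) (q j) < 1) : InPBox (insert q (cornerBox a b)) := by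
  refine ⟨_, isBoxP_of_le (fun j => min (min (a j) (b j)) (q j))
    (fun j => max (max (a j) (b j)) (q j)) 
    (fun j => (min_le_right _ _).trans (le_max_right _ _)) h, ?_⟩
  rintro p (rfl | hp) j
  · exact ⟨min_le_right _ _, le_max_right _ _⟩
  · exact ⟨min_le_of_left_le (hp j).1, le_max_of_le_left (hp j).2⟩

lemma inPBox_insert_image_cornerBox (σ : Equiv.Perm (Fin n)) (ε : Fin n → Bool)
    (a b q : EuclideanSpace ℝ (Fin n))
    (h : ∑ s, spread (flipIf (ε (σ s)) (a s)) (flipIf (ε (σ s)) (b s)) (q (σ s)) < 1) :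
    InPBox (insert q (cubeSymm σ ε '' cornerBox a b)) := by
  refine (inPBox_insert_cornerBox _ _ q ?_).mono
    (insert_subset_insert (cubeSymm_image_cornerBox_subset σ ε a b))
  rw [← Equiv.sum_comp σ]
  simpa using h

end Boxes

section Folding

def fold (v : ℝ) : ℝ := min v (1 - v)

lemma abs_flipIf_sub_eq (κ v : ℝ) : |flipIf (decide (1 / 2 < v)) κ - v| = |fold v - κ| := by
  by_cases h : 1 / 2 < v
  · rw [decide_eq_true h, flipIf_true, fold, min_eq_right (by linarith)]
    congr 1
    ring
  · rw [decide_eq_false h, flipIf_false, fold, min_eq_left (by linarith), abs_sub_comm]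

lemma fold_mem_Icc {v : ℝ} (hv : v ∈ Icc (0 : ℝ) 1) : fold v ∈ Icc (0 : ℝ) (1 / 2) := by
  simp only [fold, mem_Icc, min_def] at hv ⊢
  split_ifs <;> constructor <;> linarith [hv.1, hv.2]

lemma abs_flipIf_zero_sub_eq {v : ℝ} (hv : v ∈ Icc (0 : ℝ) 1) :
    |flipIf (decide (1 / 2 < v)) 0 - v| = fold v := by
  rw [abs_flipIf_sub_eq, sub_zero, abs_of_nonneg (fold_mem_Icc hv).1]

lemma abs_half_sub (v : ℝ) : |1 / 2 - v| = 1 / 2 - fold v := by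
  simp only [fold, min_def, abs_eq_max_neg, max_def]
  split_ifs <;> linarith

lemma spread_self (t v : ℝ) : spread t t v = |t - v| := by
  simp only [spread, max_self, min_self, max_sub_min_eq_abs']

lemma spread_quarter_le {α β v : ℝ} (hα : α ∈ Icc (1 / 4 : ℝ) (1 / 2)) (hβ : β = α + 1 / 4)
    (hv : 3 / 8 ≤ fold v) : spread α β v ≤ 3 / 8 := by
  have hv₀ : 3 / 8 ≤ v := hv.trans (min_le_left _ _)
  have hv₁ : 3 / 8 ≤ 1 - v := hv.trans (min_le_right _ _)
  simp only [spread, mem_Icc, min_def, max_def] at hα ⊢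
  split_ifs <;> linarith

lemma spread_axis_le (e : Bool) (v : ℝ) :
    spread (flipIf e (1 / 4)) (flipIf e (3 / 4)) v ≤ 1 / 2 + max 0 (1 / 4 - fold v) := by
  cases e <;> simp only [spread, flipIf, fold, Bool.false_eq_true, if_true, if_false, min_def,
    max_def] <;> split_ifs <;> linarith

end Folding

section SegmentBoxes


@[simp]
lemma pt_apply (a b : ℝ) (j : Fin 4) : pt a b j = ![a, b, 0, 0] j :=
  rfl

lemma cornerBox_pt_subset_union (α β γ κ : ℝ) :
    cornerBox (pt α κ) (pt γ κ) ⊆ cornerBox (pt α κ) (pt β κ) ∪ cornerBox (pt β κ) (pt γ κ) := by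
  intro p hp
  rcases uIcc_subset_uIcc_union_uIcc (hp 0) with h₀ | h₀
  · left
    intro j
    fin_cases j
    exacts [h₀, hp 1, hp 2, hp 3]
  · right
    intro j
    fin_cases j
    exacts [h₀, hp 1, hp 2, hp 3]

/-- For `f` the folded coordinates of a point `q`, listed in the order axis, height, corner,
corner, this is the `ℓ¹`-distance from `q` to the image of the segment `I` at height `κ` under the
cube symmetry that puts these roles on these coordinates and moves `I` to the side of `q`. -/
noncomputable def segDist (f : Fin 4 → ℝ) (κ : ℝ) : ℝ := max 0 (1 / 4 - f 0) + |f 1 - κ| + f 2 + f 3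

lemma inPBox_insert_image_segment (q : ℝ⁴) (hq : ∀ j, q j ∈ Icc (0 : ℝ) 1)
    (σ : Equiv.Perm (Fin 4)) (κ : ℝ) (h : segDist (fold ∘ q ∘ σ) κ < 1 / 2) :
    InPBox (insert q (cubeSymm σ (fun j => decide (1 / 2 < q j)) ''
      segment ℝ (pt (1 / 4) κ) (pt (3 / 4) κ))) := by
  refine (inPBox_insert_image_cornerBox _ _ _ _ q ?_).mono
    (insert_subset_insert (image_mono (segment_subset_cornerBox _ _)))
  have := spread_axis_le (decide (1 / 2 < q (σ 0))) (q (σ 0))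
  simp only [Fin.sum_univ_four, pt_apply, Matrix.cons_val, spread_self, abs_flipIf_sub_eq,
    abs_flipIf_zero_sub_eq (hq _)]
  simp only [segDist, Function.comp_apply] at h
  linarith

lemma inPBox_insert_image_quarterSegment (ε : Fin 4 → Bool) (hε : ε 2 = false) (y : ℝ⁴)
    {α β : ℝ} (hα : α ∈ Icc (1 / 4 : ℝ) (1 / 2)) (hβ : β = α + 1 / 4) (hy : 3 / 8 ≤ fold (y 2))
    (hcorner : |flipIf (ε 0) 0 - y 0| + |flipIf (ε 1) 0 - y 1| ≤ fold (y 3)) :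
    InPBox (insert y (cubeSymm (Equiv.swap 0 2 * Equiv.swap 1 3) ε ''
      cornerBox (pt α (1 / 2)) (pt β (1 / 2)))) := by
  refine inPBox_insert_image_cornerBox _ _ _ _ y ?_
  have := spread_quarter_le hα hβ hy
  have := abs_half_sub (y 3)
  simp only [Fin.sum_univ_four, pt_apply, Matrix.cons_val, spread_self, Equiv.Perm.mul_apply,
    Equiv.swap_apply_def]
  simp only [Fin.isValue, Fin.reduceEq, if_true, if_false, hε, flipIf_half, flipIf_false]
  linarith

end SegmentBoxes

section Dichotomy

lemma exists_abs_sub_quarter_le {v : ℝ} (hv : v ∈ Icc (0 : ℝ) (1 / 2)) :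
    ∃ k : Fin 3, |v - (k : ℝ) / 4| ≤ 1 / 8 := by
  obtain ⟨hv₀, hv₁⟩ := hv
  rcases le_total v (1 / 8) with h | h
  · exact ⟨0, by norm_num [abs_le]; constructor <;> linarith⟩
  rcases le_total v (3 / 8) with h' | h'
  · exact ⟨1, by norm_num [abs_le]; constructor <;> linarith⟩
  · exact ⟨2, by norm_num [abs_le]; constructor <;> linarith⟩

lemma exists_segDist_lt_or (f : Fin 4 → ℝ) (hf : ∀ s, f s ∈ Icc (0 : ℝ) (1 / 2)) (hf₃ : f 3 = 0) :
    (∃ τ : Equiv.Perm (Fin 4), ∃ k : Fin 3, segDist (f ∘ τ) ((k : ℝ) / 4) < 1 / 2) ∨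
      (3 / 8 ≤ f 1 ∧ f 0 ≤ f 2) := by
  refine or_iff_not_imp_left.mpr fun hfar => ?_
  simp only [not_exists, not_lt] at hfar
  have far : ∀ τ : Equiv.Perm (Fin 4), τ 3 = 3 → ∀ k : Fin 3,
      1 / 2 ≤ max 0 (1 / 4 - f (τ 0)) + |f (τ 1) - (k : ℝ) / 4| + f (τ 2) := by
    intro τ hτ k
    simpa [segDist, hτ, hf₃] using hfar τ k
  have abc := far 1 rfl
  have acb := far (Equiv.swap 1 2) rfl
  have bac := far (Equiv.swap 0 1) rfl
  have cba := far (Equiv.swap 0 2) rfl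
  have cab := far (Equiv.swap 0 2 * Equiv.swap 1 2) rfl
  simp only [Equiv.Perm.one_apply, Equiv.Perm.mul_apply, Equiv.swap_apply_def, Fin.isValue,
    Fin.reduceEq, if_true, if_false] at abc acb bac cba cab
  -- `acb` : `f 0` on the axis, `f 2` as height, `f 1` at a corner; likewise for the others.
  obtain ⟨ha₀, ha₁⟩ := hf 0
  obtain ⟨hb₀, hb₁⟩ := hf 1
  obtain ⟨hc₀, hc₁⟩ := hf 2
  have not_both_small : ¬(f 0 < 1 / 4 ∧ f 2 < 1 / 4) := by
    rintro ⟨ha, hc⟩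
    obtain ⟨k, hk⟩ := exists_abs_sub_quarter_le (hf 1)
    have h₁ := abc k
    have h₂ := cba k
    rw [max_eq_right (by linarith)] at h₁ h₂
    linarith
  have hb : 3 / 8 ≤ f 1 := by
    rcases le_or_gt (1 / 4) (f 0) with ha | ha
    · obtain ⟨k, hk⟩ := exists_abs_sub_quarter_le (hf 2)
      have h := acb k
      rw [max_eq_left (by linarith)] at h
      linarith
    · obtain ⟨k, hk⟩ := exists_abs_sub_quarter_le (hf 0)
      have h := cab k
      rw [max_eq_left (by linarith [not_and.mp not_both_small ha])] at h
      linarith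
  refine ⟨hb, ?_⟩
  have h := bac 2
  rw [max_eq_left (by linarith), abs_of_nonpos (by norm_num; linarith)] at h
  norm_num at h
  linarith

end Dichotomy

section Cover


lemma exists_endpoint {n : ℕ} (p : EuclideanSpace ℝ (Fin n)) (i : Fin n) (hp : p i = 0) (b : Bool) :
    ∃ y z : EuclideanSpace ℝ (Fin n), ({p, p + EuclideanSpace.single i 1} : Set _) ⊆ {y, z} ∧
      y i = flipIf b 0 ∧ ∀ j ≠ i, y j = p j := by
  cases b
  · exact ⟨p, _, subset_rfl, hp, fun _ _ => rfl⟩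
  · refine ⟨p + EuclideanSpace.single i 1, p, pair_comm _ _ ▸ subset_rfl, by simp [hp], ?_⟩
    intro j hj
    simp [hj]

def HasEightBoxCover (x : Fin 4 → ℝ⁴) (k : Fin 3) (g : ℝ⁴ → ℝ⁴) : Prop :=
  ∃ P : Fin 8 → Set ℝ⁴, (∀ i, IsBoxP 4 (P i)) ∧
    (⋃ i, ({x i, x i + EuclideanSpace.single i 1} : Set ℝ⁴)) ∪
      g '' segment ℝ (pt (1 / 4) ((k : ℝ) / 4)) (pt (3 / 4) ((k : ℝ) / 4)) ⊆ ⋃ i, P i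

lemma exists_cover_of_inPBox (x : Fin 4 → ℝ⁴) {S T₁ T₂ : Set ℝ⁴} {z₀ z₁ : ℝ⁴}
    (h₁ : InPBox T₁) (h₂ : InPBox T₂) (hS : S ⊆ T₁ ∪ T₂)
    (hx₀ : ({x 0, x 0 + EuclideanSpace.single 0 1} : Set ℝ⁴) ⊆ insert z₀ (T₁ ∪ T₂))
    (hx₁ : ({x 1, x 1 + EuclideanSpace.single 1 1} : Set ℝ⁴) ⊆ insert z₁ (T₁ ∪ T₂)) :
    ∃ P : Fin 8 → Set ℝ⁴, (∀ i, IsBoxP 4 (P i)) ∧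
      (⋃ i, ({x i, x i + EuclideanSpace.single i 1} : Set ℝ⁴)) ∪ S ⊆ ⋃ i, P i := by
  obtain ⟨B₁, hB₁, hTB₁⟩ := h₁
  obtain ⟨B₂, hB₂, hTB₂⟩ := h₂
  refine ⟨![B₁, B₂, {z₀}, {z₁}, {x 2}, {x 2 + EuclideanSpace.single 2 1}, {x 3},
    {x 3 + EuclideanSpace.single 3 1}], ?_, ?_⟩
  · intro i
    fin_cases i
    exacts [hB₁, hB₂, isBoxP_singleton _, isBoxP_singleton _, isBoxP_singleton _,
      isBoxP_singleton _, isBoxP_singleton _, isBoxP_singleton _]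
  have hP : ∀ i, _ ⊆ ⋃ i, _ := subset_iUnion (![B₁, B₂, {z₀}, {z₁}, {x 2},
    {x 2 + EuclideanSpace.single 2 1}, {x 3}, {x 3 + EuclideanSpace.single 3 1}] : Fin 8 → Set ℝ⁴)
  have hT : T₁ ∪ T₂ ⊆ ⋃ i, _ := union_subset_union hTB₁ hTB₂ |>.trans (union_subset (hP 0) (hP 1))
  refine union_subset (iUnion_subset fun i => ?_) (hS.trans hT)
  fin_cases i
  · exact hx₀.trans (insert_subset (hP 2 rfl) hT)
  · exact hx₁.trans (insert_subset (hP 3 rfl) hT)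
  · exact insert_subset (hP 4 rfl) (singleton_subset_iff.mpr (hP 5 rfl))
  · exact insert_subset (hP 6 rfl) (singleton_subset_iff.mpr (hP 7 rfl))

lemma hasEightBoxCover_of_segDist_lt (x : Fin 4 → ℝ⁴) (hx : ∀ i j, x i j ∈ Icc (0 : ℝ) 1)
    {i : Fin 4} (hi : i = 0 ∨ i = 1) (σ : Equiv.Perm (Fin 4)) (k : Fin 3)
    (h : segDist (fold ∘ x i ∘ σ) ((k : ℝ) / 4) < 1 / 2) :
    HasEightBoxCover x k (cubeSymm σ fun j => decide (1 / 2 < x i j)) := by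
  have hT := inPBox_insert_image_segment (x i) (hx i) σ _ h
  rcases hi with rfl | rfl
  · exact exists_cover_of_inPBox x (z₀ := x 0 + EuclideanSpace.single 0 1)
      (z₁ := x 1 + EuclideanSpace.single 1 1) hT (inPBox_singleton (x 1))
      (subset_union_of_subset_left (subset_insert _ _) _)
      (by simp [insert_subset_iff]) (by simp [insert_subset_iff])
  · exact exists_cover_of_inPBox x (z₀ := x 0 + EuclideanSpace.single 0 1)
      (z₁ := x 1 + EuclideanSpace.single 1 1) (inPBox_singleton (x 0)) hT
      (subset_union_of_subset_right (subset_insert _ _) _)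
      (by simp [insert_subset_iff]) (by simp [insert_subset_iff])

/-- The image of `I₂` runs along coordinate `2` at height `1/2` in coordinate `3`, with its
corner coordinates `0` and `1` on the side of `x 1` and of `x 0` respectively. -/
lemma hasEightBoxCover_of_central (x : Fin 4 → ℝ⁴) (hx : ∀ i j, x i j ∈ Icc (0 : ℝ) 1)
    (hx₀ : x 0 0 = 0) (hx₁ : x 1 1 = 0)
    (h₀ : 3 / 8 ≤ fold (x 0 2)) (h₀' : fold (x 0 1) ≤ fold (x 0 3))
    (h₁ : 3 / 8 ≤ fold (x 1 2)) (h₁' : fold (x 1 0) ≤ fold (x 1 3)) :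
    HasEightBoxCover x 2 (cubeSymm (Equiv.swap 0 2 * Equiv.swap 1 3)
      ![decide (1 / 2 < x 1 0), decide (1 / 2 < x 0 1), false, false]) := by
  set ε : Fin 4 → Bool := ![decide (1 / 2 < x 1 0), decide (1 / 2 < x 0 1), false, false]
  obtain ⟨y₀, z₀, hxy₀, hy₀, hy₀'⟩ := exists_endpoint (x 0) 0 hx₀ (ε 0)
  obtain ⟨y₁, z₁, hxy₁, hy₁, hy₁'⟩ := exists_endpoint (x 1) 1 hx₁ (ε 1)
  refine exists_cover_of_inPBox x (z₀ := z₀) (z₁ := z₁)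
    (inPBox_insert_image_quarterSegment ε rfl y₀ (α := 1 / 4) (β := 1 / 2) (by norm_num)
      (by norm_num) ?_ ?_)
    (inPBox_insert_image_quarterSegment ε rfl y₁ (α := 1 / 2) (β := 3 / 4) (by norm_num)
      (by norm_num) ?_ ?_) ?_ (hxy₀.trans ?_) (hxy₁.trans ?_)
  · rwa [hy₀' 2 (by decide)]
  · rw [hy₀, hy₀' 1 (by decide), hy₀' 3 (by decide), sub_self, abs_zero, zero_add]
    exact (abs_flipIf_zero_sub_eq (hx 0 1)).trans_le h₀'
  · rwa [hy₁' 2 (by decide)]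
  · rw [hy₁, hy₁' 0 (by decide), hy₁' 3 (by decide), sub_self, abs_zero, add_zero]
    exact (abs_flipIf_zero_sub_eq (hx 1 0)).trans_le h₁'
  · rw [show ((2 : Fin 3) : ℝ) / 4 = 1 / 2 by norm_num]
    refine (image_mono ((segment_subset_cornerBox _ _).trans
      (cornerBox_pt_subset_union _ (1 / 2) _ _))).trans ?_
    rw [image_union]
    exact union_subset_union (subset_insert _ _) (subset_insert _ _)
  · simp [insert_subset_iff]
  · simp [insert_subset_iff]

end Cover

theorem segment_and_A_cover (A : Set (EuclideanSpace ℝ (Fin 4))) (hA : MemA 4 A) :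
    ∃ k : Fin 3, ∃ g : EuclideanSpace ℝ (Fin 4) → EuclideanSpace ℝ (Fin 4),
      Isometry g ∧ g '' unitCube = unitCube ∧
      ∃ P : Fin 8 → Set (EuclideanSpace ℝ (Fin 4)),
        (∀ i, IsBoxP 4 (P i)) ∧
        A ∪ g '' segment ℝ (pt (1/4) ((k : ℝ)/4)) (pt (3/4) ((k : ℝ)/4)) ⊆ ⋃ i, P i := by
  obtain ⟨x, hx, rfl⟩ := hA
  suffices ∃ (k : Fin 3) (σ : Equiv.Perm (Fin 4)) (ε : Fin 4 → Bool),
      HasEightBoxCover x k (cubeSymm σ ε) by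
    obtain ⟨k, σ, ε, P, hP⟩ := this
    exact ⟨k, cubeSymm σ ε, isometry_cubeSymm σ ε, cubeSymm_image_cube σ ε, P, hP⟩
  have hcube (i : Fin 4) : ∀ j, x i j ∈ Icc (0 : ℝ) 1 := (hx i).1
  have hdiag (i : Fin 4) : x i i = 0 := by
    have := (hx i).2 i
    simp only [PiLp.add_apply, PiLp.single_apply, if_true, mem_Icc] at this
    linarith [(hcube i i).1]
  -- `finRotate 4` and `swap 0 1 * finRotate 4` list the coordinates of `x 0` and `x 1` with the
  -- one where the point vanishes last.
  rcases exists_segDist_lt_or (fold ∘ x 0 ∘ finRotate 4) (fun s => fold_mem_Icc (hcube 0 _))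
    (by simp [hdiag, fold]) with ⟨τ, k, hk⟩ | ⟨h₀, h₀'⟩
  · exact ⟨k, _, _, hasEightBoxCover_of_segDist_lt x hcube (Or.inl rfl) (finRotate 4 * τ) k hk⟩
  rcases exists_segDist_lt_or (fold ∘ x 1 ∘ ⇑(Equiv.swap 0 1 * finRotate 4 : Equiv.Perm (Fin 4)))
    (fun s => fold_mem_Icc (hcube 1 _)) (by simp [hdiag, fold]) with ⟨τ, k, hk⟩ | ⟨h₁, h₁'⟩
  · exact ⟨k, _, _, hasEightBoxCover_of_segDist_lt x hcube (Or.inr rfl)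
      (Equiv.swap 0 1 * finRotate 4 * τ) k (by rwa [Equiv.Perm.coe_mul])⟩
  exact ⟨2, _, _, hasEightBoxCover_of_central x hcube (hdiag 0) (hdiag 1) h₀ h₀' h₁ h₁'⟩
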